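/- arXiv:1010.5212 — 5 statements merged into one kernel-verified Lean document; each statement's English description precedes it below -/
import Mathlib

section
/- A set A ⊆ ℕ is generically computable if and only if A is densely approximable by c.e. sets, i.e. there exist c.e. sets C₀ and C₁ with C₀ ⊆ ℕ \ A, C₁ ⊆ A, and C₀ ∪ C₁ of density 1. -/
open Filter

open scoped Classical in
/-- `ρ_n(A) = |A ∩ {0,…,n}| / (n+1)`. -/
noncomputable def partialDensity (A : Set ℕ) (n : ℕ) : ℝ :=
  ((Finset.range (n + 1)).filter (· ∈ A)).card / (n + 1)

/-- The upper density of `A`: `limsup_n ρ_n(A)`. -/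
noncomputable def upperDensity (A : Set ℕ) : ℝ :=
  Filter.limsup (partialDensity A) Filter.atTop

/-- `A` has asymptotic density `r`: `ρ_n(A) → r`. -/
def HasDensity (A : Set ℕ) (r : ℝ) : Prop :=
  Filter.Tendsto (partialDensity A) Filter.atTop (nhds r)

open scoped Classical in
/-- The characteristic function of `A` (with values in `{0,1} ⊆ ℕ`). -/
noncomputable def charFun (A : Set ℕ) : ℕ → ℕ := fun n => if n ∈ A then 1 else 0

/-- `Φ` is a generic description of `A`: `Φ(x) = χ_A(x)` whenever `Φ(x)` is defined,
and the domain of `Φ` has density 1. -/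
def IsGenericDescription (Φ : ℕ →. ℕ) (A : Set ℕ) : Prop :=
  (∀ x m, m ∈ Φ x → m = charFun A x) ∧ HasDensity {x | (Φ x).Dom} 1

/-- `A` is generically computable: some partial computable function is a generic
description of `A`. -/
def GenericallyComputable (A : Set ℕ) : Prop :=
  ∃ Φ : ℕ →. ℕ, Partrec Φ ∧ IsGenericDescription Φ A

/-- `A` is computably enumerable: `A` is the domain of a partial computable function. -/
def CE (A : Set ℕ) : Prop :=
  ∃ f : ℕ →. ℕ, Partrec f ∧ A = {x | (f x).Dom}

/-- `A` is a computable set. -/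
def ComputableSet (A : Set ℕ) : Prop := ComputablePred (· ∈ A)

/-- `A` is immune: infinite, with no infinite c.e. subset. -/
def Immune (A : Set ℕ) : Prop :=
  A.Infinite ∧ ∀ W : Set ℕ, CE W → W.Infinite → ¬W ⊆ A

/-- `A` is bi-immune: both `A` and its complement are immune. -/
def BiImmune (A : Set ℕ) : Prop := Immune A ∧ Immune Aᶜ

/-- `A` and `B` are generically similar: their symmetric difference has density 0. -/
def GenericallySimilar (A B : Set ℕ) : Prop := HasDensity (symmDiff A B) 0

/-- `A` is coarsely computable: generically similar to a computable set. -/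
def CoarselyComputable (A : Set ℕ) : Prop :=
  ∃ C : Set ℕ, ComputableSet C ∧ GenericallySimilar A C

/-- `R_k = {m : 2^k ∣ m, 2^(k+1) ∤ m}`. -/
def Rset (k : ℕ) : Set ℕ := {m | 2 ^ k ∣ m ∧ ¬2 ^ (k + 1) ∣ m}

/-- `R(A) = ⋃_{n ∈ A} R_n`. -/
def RofSet (A : Set ℕ) : Set ℕ := ⋃ n ∈ A, Rset n

/-- Partial functions `ℕ →. ℕ` computable relative to a (total) oracle `O : ℕ → ℕ`. -/
inductive OracleRecursiveIn (O : ℕ → ℕ) : (ℕ →. ℕ) → Prop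
  | zero : OracleRecursiveIn O (pure 0)
  | succ : OracleRecursiveIn O fun n => Part.some (n + 1)
  | left : OracleRecursiveIn O fun n => Part.some (Nat.unpair n).1
  | right : OracleRecursiveIn O fun n => Part.some (Nat.unpair n).2
  | oracle : OracleRecursiveIn O fun n => Part.some (O n)
  | pair {f g : ℕ →. ℕ} : OracleRecursiveIn O f → OracleRecursiveIn O g →
      OracleRecursiveIn O fun n => Nat.pair <$> f n <*> g n
  | comp {f g : ℕ →. ℕ} : OracleRecursiveIn O f → OracleRecursiveIn O g →
      OracleRecursiveIn O fun n => g n >>= f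
  | prec {f g : ℕ →. ℕ} : OracleRecursiveIn O f → OracleRecursiveIn O g →
      OracleRecursiveIn O (Nat.unpaired fun a n =>
        n.rec (f a) fun y IH => do let i ← IH; g (Nat.pair a (Nat.pair y i)))
  | rfind {f : ℕ →. ℕ} : OracleRecursiveIn O f →
      OracleRecursiveIn O fun a => Nat.rfind fun n => (fun m => m = 0) <$> f (Nat.pair a n)

/-- `A ≤_T B`: the characteristic function of `A` is computable relative to `B`. -/
def SetTuringReducible (A B : Set ℕ) : Prop :=
  OracleRecursiveIn (charFun B) fun n => Part.some (charFun A n)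

/-- `A ≡_T B`. -/
def SetTuringEquivalent (A B : Set ℕ) : Prop :=
  SetTuringReducible A B ∧ SetTuringReducible B A

/-! A generic description `Φ` of `A` splits into the c.e. level sets `Φ⁻¹(0) ⊆ Aᶜ` and
`Φ⁻¹(1) ⊆ A`, whose union is its domain. Conversely, two disjoint c.e. sets are merged
into one partial computable function taking the value `0` on the first and `1` on the second. -/

lemma charFun_eq_zero_iff {A : Set ℕ} {x : ℕ} : charFun A x = 0 ↔ x ∉ A := by
  unfold charFun; split_ifs with h <;> simp [h]

lemma charFun_eq_one_iff {A : Set ℕ} {x : ℕ} : charFun A x = 1 ↔ x ∈ A := by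
  unfold charFun; split_ifs with h <;> simp [h]

lemma ce_setOf_mem {Φ : ℕ →. ℕ} (hΦ : Partrec Φ) (b : ℕ) : CE {x | b ∈ Φ x} := by
  refine ⟨fun x => (Φ x).bind fun m => cond (m == b) (Part.some 0) Part.none, ?_, ?_⟩
  · exact hΦ.bind (Partrec.cond (Primrec.beq.comp Primrec.snd (Primrec.const b)).to_comp
      (Partrec.const' _) Partrec.none).to₂
  · ext x
    simp only [Set.mem_ofPred_eq, Part.dom_iff_mem, Part.mem_bind_iff]
    refine ⟨fun h => ⟨0, b, h, by simp⟩, fun ⟨_, a, ha, hy⟩ => ?_⟩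
    obtain rfl : a = b := by
      by_contra hne
      simp [beq_false_of_ne hne] at hy
    exact ha

lemma CE.exists_partrec_mem_iff {C : Set ℕ} (hC : CE C) (b : ℕ) :
    ∃ g : ℕ →. ℕ, Partrec g ∧ ∀ x m, m ∈ g x ↔ x ∈ C ∧ m = b := by
  obtain ⟨f, hf, rfl⟩ := hC
  refine ⟨fun x => (f x).map fun _ => b, hf.map (Computable.const b).to₂, fun x m => ?_⟩
  simp [Part.dom_iff_mem, eq_comm]

lemma CE.exists_partrec_merge {C₀ C₁ : Set ℕ} (h₀ : CE C₀) (h₁ : CE C₁) (hd : Disjoint C₀ C₁)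
    (b₀ b₁ : ℕ) :
    ∃ k : ℕ →. ℕ, Partrec k ∧ ∀ x m, m ∈ k x ↔ x ∈ C₀ ∧ m = b₀ ∨ x ∈ C₁ ∧ m = b₁ := by
  obtain ⟨g₀, hg₀, hmem₀⟩ := h₀.exists_partrec_mem_iff b₀
  obtain ⟨g₁, hg₁, hmem₁⟩ := h₁.exists_partrec_mem_iff b₁
  have hcons : ∀ x, ∀ m ∈ g₀ x, ∀ n ∈ g₁ x, m = n := fun x m hm n hn =>
    (hd.notMem_of_mem_left ((hmem₀ x m).1 hm).1 ((hmem₁ x n).1 hn).1).elim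
  obtain ⟨k, hk, hmerge⟩ := Partrec.merge hg₀ hg₁ hcons
  exact ⟨k, hk, fun x m => by rw [hmerge, hmem₀, hmem₁]⟩

lemma setOf_dom_eq_of_forall_mem_eq_charFun {Φ : ℕ →. ℕ} {A : Set ℕ}
    (hval : ∀ x m, m ∈ Φ x → m = charFun A x) :
    {x | (Φ x).Dom} = {x | 0 ∈ Φ x} ∪ {x | 1 ∈ Φ x} := by
  ext x
  refine ⟨fun h => ?_, by rintro (h | h) <;> exact Part.dom_iff_mem.2 ⟨_, h⟩⟩
  obtain ⟨m, hm⟩ := Part.dom_iff_mem.1 h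
  have hm_eq := hval x m hm
  by_cases hx : x ∈ A
  · rw [charFun_eq_one_iff.2 hx] at hm_eq
    exact Or.inr (hm_eq ▸ hm)
  · rw [charFun_eq_zero_iff.2 hx] at hm_eq
    exact Or.inl (hm_eq ▸ hm)

/-- `A` is generically computable iff `A` is densely approximable by
c.e. sets. -/
theorem stmt0 (A : Set ℕ) :
    GenericallyComputable A ↔
      ∃ C₀ C₁ : Set ℕ, CE C₀ ∧ CE C₁ ∧ C₀ ⊆ Aᶜ ∧ C₁ ⊆ A ∧ HasDensity (C₀ ∪ C₁) 1 := by
  constructor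
  · rintro ⟨Φ, hΦ, hval, hdens⟩
    refine ⟨_, _, ce_setOf_mem hΦ 0, ce_setOf_mem hΦ 1, fun x hx => ?_, fun x hx => ?_,
      setOf_dom_eq_of_forall_mem_eq_charFun hval ▸ hdens⟩
    · exact charFun_eq_zero_iff.1 (hval x 0 hx).symm
    · exact charFun_eq_one_iff.1 (hval x 1 hx).symm
  · rintro ⟨C₀, C₁, hC₀, hC₁, h₀, h₁, hdens⟩
    obtain ⟨k, hk, hmem⟩ :=
      hC₀.exists_partrec_merge hC₁ (Set.disjoint_left.2 fun x hx₀ hx₁ => h₀ hx₀ (h₁ hx₁)) 0 1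
    have hdom : {x | (k x).Dom} = C₀ ∪ C₁ := by
      ext x
      simp [Part.dom_iff_mem, hmem, exists_or]
    refine ⟨k, hk, fun x m hm => ?_, hdom ▸ hdens⟩
    rcases (hmem x m).1 hm with ⟨hx, rfl⟩ | ⟨hx, rfl⟩
    · exact (charFun_eq_zero_iff.2 (h₀ hx)).symm
    · exact (charFun_eq_one_iff.2 (h₁ hx)).symm
end

section
/- Restricted countable additivity of density: if S₀, S₁, S₂, … are pairwise disjoint subsets of ℕ such that each density ρ(S_i) exists and the upper density of ⋃_{i ≥ N} S_i tends to 0 as N → ∞, then the density of ⋃_{i=0}^{∞} S_i exists and equals Σ_{i=0}^{∞} ρ(S_i). -/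
open Filter

/-- Partial functions `ℕ →. ℕ` computable relative to a (total) oracle `O : ℕ → ℕ`. -/
inductive RecursiveInOracle (O : ℕ → ℕ) : (ℕ →. ℕ) → Prop
  | zero : RecursiveInOracle O (pure 0)
  | succ : RecursiveInOracle O fun n => Part.some (n + 1)
  | left : RecursiveInOracle O fun n => Part.some (Nat.unpair n).1
  | right : RecursiveInOracle O fun n => Part.some (Nat.unpair n).2
  | oracle : RecursiveInOracle O fun n => Part.some (O n)
  | pair {f g : ℕ →. ℕ} : RecursiveInOracle O f → RecursiveInOracle O g →
      RecursiveInOracle O fun n => Nat.pair <$> f n <*> g n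
  | comp {f g : ℕ →. ℕ} : RecursiveInOracle O f → RecursiveInOracle O g →
      RecursiveInOracle O fun n => g n >>= f
  | prec {f g : ℕ →. ℕ} : RecursiveInOracle O f → RecursiveInOracle O g →
      RecursiveInOracle O (Nat.unpaired fun a n =>
        n.rec (f a) fun y IH => do let i ← IH; g (Nat.pair a (Nat.pair y i)))
  | rfind {f : ℕ →. ℕ} : RecursiveInOracle O f →
      RecursiveInOracle O fun a => Nat.rfind fun n => (fun m => m = 0) <$> f (Nat.pair a n)

/-- `A ≤_T B`: the characteristic function of `A` is computable relative to `B`. -/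
def TuringReducibleSet (A B : Set ℕ) : Prop :=
  RecursiveInOracle (charFun B) fun n => Part.some (charFun A n)

/-- `A ≡_T B`. -/
def TuringEquivalentSet (A B : Set ℕ) : Prop :=
  TuringReducibleSet A B ∧ TuringReducibleSet B A

/-!
Split `⋃ i, S i` into the head `⋃_{i<N} S i`, of density `∑_{i<N} d i` by finite additivity,
and the tail `T_N = ⋃_{i≥N} S i`. Since `0 ≤ ρ_n(T_N)` and eventually `ρ_n(T_N)` is below any
bound exceeding `upperDensity T_N`, all limit points of `ρ_n(⋃ i, S i)` lie in
`[∑_{i<N} d i, ∑_{i<N} d i + upperDensity T_N]` for every `N`; both ends tend to `∑' i, d i`.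
Finite additivity also gives `∑_{i<N} d i ≤ 1`, hence summability of `d`.
-/

lemma partialDensity_nonneg (A : Set ℕ) (n : ℕ) : 0 ≤ partialDensity A n := by
  unfold partialDensity; positivity

open scoped Classical in
lemma partialDensity_le_one (A : Set ℕ) (n : ℕ) : partialDensity A n ≤ 1 := by
  unfold partialDensity
  rw [div_le_one (by positivity)]
  exact_mod_cast (Finset.card_filter_le _ _).trans (Finset.card_range (n + 1)).le

open scoped Classical in
lemma partialDensity_union {A B : Set ℕ} (h : Disjoint A B) (n : ℕ) :
    partialDensity (A ∪ B) n = partialDensity A n + partialDensity B n := by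
  have hAB : Disjoint ((Finset.range (n + 1)).filter (· ∈ A))
      ((Finset.range (n + 1)).filter (· ∈ B)) :=
    Finset.disjoint_filter.2 fun x _ hA hB => h.ne_of_mem hA hB rfl
  unfold partialDensity
  rw [← add_div, ← Nat.cast_add, ← Finset.card_union_of_disjoint hAB]
  congr 3
  ext
  simp [and_or_left]

lemma partialDensity_biUnion {S : ℕ → Set ℕ} (hS : Pairwise fun i j => Disjoint (S i) (S j))
    (s : Finset ℕ) (n : ℕ) :
    partialDensity (⋃ i ∈ s, S i) n = ∑ i ∈ s, partialDensity (S i) n := by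
  induction s using Finset.induction_on with
  | empty => simp [partialDensity]
  | insert a s ha ih =>
    rw [Finset.sum_insert ha, ← ih, Finset.set_biUnion_insert, partialDensity_union]
    exact Set.disjoint_iUnion₂_right.2 fun i hi => hS fun h => ha (h ▸ hi)

lemma partialDensity_iUnion_eq_add_tail {S : ℕ → Set ℕ}
    (hS : Pairwise fun i j => Disjoint (S i) (S j)) (N n : ℕ) :
    partialDensity (⋃ i, S i) n =
      partialDensity (⋃ i ∈ Finset.range N, S i) n + partialDensity (⋃ i ∈ Set.Ici N, S i) n := by
  have hsplit : ⋃ i, S i = (⋃ i ∈ Finset.range N, S i) ∪ ⋃ i ∈ Set.Ici N, S i := by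
    ext x
    simp only [Set.mem_iUnion, Set.mem_union, Finset.mem_range, Set.mem_Ici, exists_prop]
    exact ⟨fun ⟨i, hi⟩ => (lt_or_ge i N).imp (⟨i, ·, hi⟩) (⟨i, ·, hi⟩),
      by rintro (⟨i, -, hi⟩ | ⟨i, -, hi⟩) <;> exact ⟨i, hi⟩⟩
  rw [hsplit, partialDensity_union]
  refine Set.disjoint_iUnion₂_left.2 fun i hi => Set.disjoint_iUnion₂_right.2 fun j hj => hS ?_
  simp only [Finset.mem_range, Set.mem_Ici] at hi hj
  omega

lemma HasDensity.nonneg {A : Set ℕ} {r : ℝ} (h : HasDensity A r) : 0 ≤ r :=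
  ge_of_tendsto' h (partialDensity_nonneg A)

lemma HasDensity.le_one {A : Set ℕ} {r : ℝ} (h : HasDensity A r) : r ≤ 1 :=
  le_of_tendsto' h (partialDensity_le_one A)

lemma hasDensity_biUnion {S : ℕ → Set ℕ} {d : ℕ → ℝ}
    (hS : Pairwise fun i j => Disjoint (S i) (S j)) (hd : ∀ i, HasDensity (S i) (d i))
    (s : Finset ℕ) : HasDensity (⋃ i ∈ s, S i) (∑ i ∈ s, d i) :=
  (tendsto_finsetSum s fun i _ => hd i).congr fun n => (partialDensity_biUnion hS s n).symm

lemma summable_of_hasDensity {S : ℕ → Set ℕ} {d : ℕ → ℝ}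
    (hS : Pairwise fun i j => Disjoint (S i) (S j)) (hd : ∀ i, HasDensity (S i) (d i)) :
    Summable d :=
  summable_of_sum_range_le (fun i => (hd i).nonneg)
    fun N => (hasDensity_biUnion hS hd (Finset.range N)).le_one

lemma eventually_partialDensity_lt {A : Set ℕ} {r : ℝ} (h : upperDensity A < r) :
    ∀ᶠ n in atTop, partialDensity A n < r :=
  eventually_lt_of_limsup_lt h (isBoundedUnder_of ⟨1, partialDensity_le_one A⟩)

/-- restricted countable additivity of asymptotic density. -/
theorem stmt3 (S : ℕ → Set ℕ) (d : ℕ → ℝ)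
    (hdisj : Pairwise fun i j => Disjoint (S i) (S j))
    (hdens : ∀ i, HasDensity (S i) (d i))
    (htail : Filter.Tendsto (fun N => upperDensity (⋃ i ∈ Set.Ici N, S i))
      Filter.atTop (nhds 0)) :
    HasDensity (⋃ i, S i) (∑' i, d i) := by
  have hsum := summable_of_hasDensity hdisj hdens
  have hpartial : Tendsto (fun N => ∑ i ∈ Finset.range N, d i) atTop (nhds (∑' i, d i)) :=
    hsum.hasSum.tendsto_sum_nat
  rw [HasDensity, tendsto_order]
  refine ⟨fun a ha => ?_, fun a ha => ?_⟩
  · obtain ⟨N, hN⟩ := (hpartial.eventually (lt_mem_nhds ha)).exists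
    filter_upwards [(hasDensity_biUnion hdisj hdens (Finset.range N)).eventually
      (lt_mem_nhds hN)] with n hhead
    rw [partialDensity_iUnion_eq_add_tail hdisj N n]
    linarith [partialDensity_nonneg (⋃ i ∈ Set.Ici N, S i) n]
  · have hδ : 0 < (a - ∑' i, d i) / 2 := half_pos (sub_pos.2 ha)
    obtain ⟨N, hN⟩ := (htail.eventually (gt_mem_nhds hδ)).exists
    have hle : ∑ i ∈ Finset.range N, d i ≤ ∑' i, d i :=
      hsum.sum_le_tsum _ fun i _ => (hdens i).nonneg
    filter_upwards [(hasDensity_biUnion hdisj hdens (Finset.range N)).eventually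
      (gt_mem_nhds (lt_add_of_pos_right _ hδ)), eventually_partialDensity_lt hN] with n hhead hrest
    rw [partialDensity_iUnion_eq_add_tail hdisj N n]
    linarith
end

section
/- Every nonzero Turing degree contains a set which is not generically computable: for every noncomputable set A ⊆ ℕ there is a set B ⊆ ℕ with B ≡_T A such that B is not generically computable. -/
/-!
Take `B = R(A)`, which copies the bit `A(k)` onto all of `R_k`, the numbers of `2`-adic valuation
`k`. Then `A(k) = R(A)(2^k)` and `R(A)(m) = A(v₂(m))` for `m ≠ 0`, so `R(A) ≡_T A`. Each `R_k`
contains the numbers `2^k (2n+1)`, which grow linearly in `n`, so `R_k` does not have density `0`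
and therefore meets the domain of every generic description of `R(A)`. Dovetailing a generic
description over `R_k` until some computation halts thus computes `A(k)`, so `A` would be
computable if `R(A)` were generically computable.
-/

open Filter

theorem primrec₂_pow : Primrec₂ fun a b : ℕ => a ^ b :=
  ((Primrec.nat_iff.2 Nat.Primrec.pow).comp (Primrec₂.natPair.comp .fst .snd)).of_eq
    fun _ => by simp

theorem primrec_padicValNat {p : ℕ} (hp : p ≠ 1) : Primrec (padicValNat p) := by
  have hdvd : PrimrecRel fun m k : ℕ => p ^ k ∣ m :=
    (Primrec.eq.comp (Primrec.nat_mod.comp .fst (primrec₂_pow.comp (.const p) .snd))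
      (.const 0)).of_eq fun _ => Nat.dvd_iff_mod_eq_zero.symm
  refine (Primrec.nat_findGreatest .id hdvd).of_eq fun m => Nat.findGreatest_eq_iff.2
    ⟨Nat.padicValNat_le_self m, fun _ => pow_padicValNat_dvd, fun k hlt hle hk => ?_⟩
  rcases eq_or_ne m 0 with rfl | hm
  · exact absurd hle (Nat.zero_lt_of_lt hlt).not_ge
  · exact absurd ((padicValNat_dvd_iff_le_of_ne_one hp hm).1 hk) (not_le.2 hlt)

theorem mem_Rset_iff {k m : ℕ} : m ∈ Rset k ↔ m ≠ 0 ∧ padicValNat 2 m = k := by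
  simp only [Rset, Set.mem_ofPred_eq, padicValNat_dvd_iff]
  omega

theorem mem_RofSet_iff {A : Set ℕ} {m : ℕ} : m ∈ RofSet A ↔ m ≠ 0 ∧ padicValNat 2 m ∈ A := by
  simp [RofSet, mem_Rset_iff]

theorem two_pow_mul_odd_mem_RofSet_iff {A : Set ℕ} {k n : ℕ} :
    2 ^ k * (2 * n + 1) ∈ RofSet A ↔ k ∈ A := by
  have hodd : padicValNat 2 (2 * n + 1) = 0 := padicValNat.eq_zero_of_not_dvd (by omega)
  rw [mem_RofSet_iff, padicValNat.mul (by positivity) (by omega), padicValNat.prime_pow, hodd,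
    add_zero]
  exact and_iff_right (by positivity)

theorem charFun_eq_of_iff {A B : Set ℕ} {m k : ℕ} (h : m ∈ B ↔ k ∈ A) :
    charFun B m = charFun A k := by
  simp only [charFun]
  split_ifs <;> simp_all

theorem charFun_RofSet (A : Set ℕ) (m : ℕ) :
    charFun (RofSet A) m = if m = 0 then 0 else charFun A (padicValNat 2 m) := by
  split_ifs with hm
  · simp [charFun, mem_RofSet_iff, hm]
  · exact charFun_eq_of_iff (by simp [mem_RofSet_iff, hm])

theorem computableSet_of_computable_charFun {A : Set ℕ} (h : Computable (charFun A)) :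
    ComputableSet A := by
  refine ComputablePred.computable_iff.2 ⟨fun k => charFun A k == 1,
    (Primrec.beq.comp .id (.const 1)).to_comp.comp h, funext fun k => ?_⟩
  by_cases hk : k ∈ A <;> simp [charFun, hk]

namespace OracleRecursiveIn

variable {O : ℕ → ℕ}

theorem of_eq {f g : ℕ →. ℕ} (hf : OracleRecursiveIn O f) (H : ∀ n, f n = g n) :
    OracleRecursiveIn O g :=
  funext H ▸ hf

theorem of_natPartrec {f : ℕ →. ℕ} (hf : Nat.Partrec f) : OracleRecursiveIn O f := by
  induction hf with
  | zero => exact .zero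
  | succ => exact .succ
  | left => exact .left
  | right => exact .right
  | pair _ _ ihf ihg => exact .pair ihf ihg
  | comp _ _ ihf ihg => exact .comp ihf ihg
  | prec _ _ ihf ihg => exact .prec ihf ihg
  | rfind _ ihf => exact .rfind ihf

theorem of_computable {f : ℕ → ℕ} (hf : Computable f) :
    OracleRecursiveIn O fun n => Part.some (f n) :=
  of_natPartrec (Partrec.nat_iff.1 hf.partrec)

theorem computable_query {g : ℕ → ℕ} {h : ℕ → ℕ → ℕ} (hg : Computable g) (hh : Computable₂ h) :
    OracleRecursiveIn O fun n => Part.some (h n (O (g n))) := by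
  have hquery : OracleRecursiveIn O fun n => Part.some (O (g n)) :=
    (comp oracle (of_computable hg)).of_eq fun _ => Part.bind_some _ _
  have hpost : Computable fun p : ℕ => h p.unpair.1 p.unpair.2 :=
    hh.comp (Computable.fst.comp .unpair) (Computable.snd.comp .unpair)
  exact (comp (of_computable hpost) (pair (of_computable .id) hquery)).of_eq
    fun n => by simp [Seq.seq]

end OracleRecursiveIn

theorem setTuringEquivalent_RofSet (A : Set ℕ) : SetTuringEquivalent (RofSet A) A := by
  have hval : Computable (padicValNat 2) := (primrec_padicValNat (by norm_num)).to_comp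
  have hmask : Computable₂ fun m b : ℕ => if m = 0 then 0 else b :=
    (Primrec.ite (Primrec.eq.comp .fst (.const 0)) (.const 0) .snd).to_comp
  have hpow : Computable fun k : ℕ => 2 ^ k := (primrec₂_pow.comp (.const 2) .id).to_comp
  refine ⟨(OracleRecursiveIn.computable_query hval hmask).of_eq fun m => ?_,
    (OracleRecursiveIn.computable_query hpow (h := fun _ b => b) Computable.snd).of_eq fun k => ?_⟩
  · rw [charFun_RofSet]
  · rw [charFun_eq_of_iff (by simpa using two_pow_mul_odd_mem_RofSet_iff (n := 0))]

theorem partialDensity_mono {S T : Set ℕ} (h : S ⊆ T) (n : ℕ) :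
    partialDensity S n ≤ partialDensity T n := by
  unfold partialDensity
  gcongr

theorem partialDensity_compl (S : Set ℕ) (n : ℕ) :
    partialDensity Sᶜ n = 1 - partialDensity S n := by
  classical
  have hsplit := Finset.card_filter_add_card_filter_not
    (s := Finset.range (n + 1)) (· ∈ S)
  rw [Finset.card_range] at hsplit
  unfold partialDensity
  rw [eq_sub_iff_add_eq, ← add_div, div_eq_one_iff_eq (by positivity)]
  norm_cast
  convert (add_comm _ _).trans hsplit using 3
  ext
  simp

theorem HasDensity.compl {S : Set ℕ} {r : ℝ} (h : HasDensity S r) : HasDensity Sᶜ (1 - r) := by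
  unfold HasDensity
  simp only [funext (partialDensity_compl S)]
  exact tendsto_const_nhds.sub h

theorem HasDensity.of_subset_zero {S T : Set ℕ} (hT : HasDensity T 0) (h : S ⊆ T) :
    HasDensity S 0 :=
  tendsto_of_tendsto_of_tendsto_of_le_of_le tendsto_const_nhds hT
    (fun n => by unfold partialDensity; positivity) (partialDensity_mono h)

theorem inv_le_partialDensity_range {f : ℕ → ℕ} {c : ℕ} (hf : StrictMono f)
    (hc : ∀ i, f i < c * (i + 1)) (j : ℕ) :
    (c : ℝ)⁻¹ ≤ partialDensity (Set.range f) (f j) := by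
  classical
  have hcard : j + 1 ≤ ((Finset.range (f j + 1)).filter (· ∈ Set.range f)).card := by
    calc j + 1 = ((Finset.range (j + 1)).image f).card := by
          rw [Finset.card_image_of_injective _ hf.injective, Finset.card_range]
      _ ≤ _ := Finset.card_le_card fun x hx => by
          obtain ⟨i, hi, rfl⟩ := Finset.mem_image.1 hx
          exact Finset.mem_filter.2 ⟨Finset.mem_range.2 (Nat.lt_succ_of_le
            (hf.monotone (Nat.le_of_lt_succ (Finset.mem_range.1 hi)))), i, rfl⟩
  have hc0 : 0 < c := Nat.pos_of_mul_pos_right ((Nat.zero_le _).trans_lt (hc 0))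
  unfold partialDensity
  rw [le_div_iff₀ (by positivity), inv_mul_le_iff₀ (by exact_mod_cast hc0)]
  exact_mod_cast (hc j).trans_le (Nat.mul_le_mul_left c hcard)

theorem not_hasDensity_zero_range {f : ℕ → ℕ} {c : ℕ} (hf : StrictMono f)
    (hc : ∀ i, f i < c * (i + 1)) : ¬HasDensity (Set.range f) 0 := fun h0 =>
  have hc0 : 0 < c := Nat.pos_of_mul_pos_right ((Nat.zero_le _).trans_lt (hc 0))
  (inv_pos.2 (Nat.cast_pos.2 hc0)).not_ge <| ge_of_tendsto (h0.comp hf.tendsto_atTop)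
    (Eventually.of_forall (inv_le_partialDensity_range hf hc))

theorem HasDensity.exists_mem_range {D : Set ℕ} (hD : HasDensity D 1) {f : ℕ → ℕ} {c : ℕ}
    (hf : StrictMono f) (hc : ∀ i, f i < c * (i + 1)) : ∃ i, f i ∈ D := by
  by_contra! hdisj
  have hcompl : HasDensity Dᶜ 0 := sub_self (1 : ℝ) ▸ hD.compl
  refine not_hasDensity_zero_range hf hc (hcompl.of_subset_zero ?_)
  rintro _ ⟨i, rfl⟩
  exact hdisj i

theorem HasDensity.exists_two_pow_mul_odd_mem {D : Set ℕ} (hD : HasDensity D 1) (k : ℕ) :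
    ∃ n, 2 ^ k * (2 * n + 1) ∈ D := by
  refine hD.exists_mem_range (c := 2 ^ (k + 1))
    (fun a b hab => Nat.mul_lt_mul_of_pos_left (by omega) (by positivity)) fun n => ?_
  rw [pow_succ, mul_assoc]
  exact Nat.mul_lt_mul_of_pos_left (by omega) (by positivity)

theorem Partrec.exists_dovetail {α : Type*} [Primcodable α] {Φ : ℕ →. ℕ} (hΦ : Partrec Φ)
    {g : α → ℕ → ℕ} (hg : Computable₂ g) :
    ∃ F : α →. ℕ, Partrec F ∧
      ∀ a, ((∃ n, (Φ (g a n)).Dom) → (F a).Dom) ∧ ∀ y ∈ F a, ∃ n, y ∈ Φ (g a n) := by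
  obtain ⟨c, rfl⟩ := Nat.Partrec.Code.exists_code.1 (Partrec.nat_iff.1 hΦ)
  have hstage : Computable₂ fun (a : α) (s : ℕ) =>
      Nat.Partrec.Code.evaln s.unpair.1 c (g a s.unpair.2) :=
    Nat.Partrec.Code.primrec_evaln.to_comp.comp
      (((Computable.fst.comp (Computable.unpair.comp .snd)).pair (.const c)).pair
        (hg.comp .fst (Computable.snd.comp (Computable.unpair.comp .snd))))
  refine ⟨_, Partrec.rfindOpt hstage, fun a => ⟨?_, fun y hy => ?_⟩⟩
  · rintro ⟨n, hn⟩
    obtain ⟨s, hs⟩ := Nat.Partrec.Code.evaln_complete.1 (Part.get_mem hn)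
    exact Nat.rfindOpt_dom.2 ⟨Nat.pair s n, _, by simpa using hs⟩
  · obtain ⟨s, hs⟩ := Nat.rfindOpt_spec hy
    exact ⟨s.unpair.2, Nat.Partrec.Code.evaln_sound hs⟩

theorem computableSet_of_genericallyComputable_RofSet {A : Set ℕ}
    (h : GenericallyComputable (RofSet A)) : ComputableSet A := by
  obtain ⟨Φ, hΦ, hcorrect, hdense⟩ := h
  obtain ⟨F, hF, hsearch⟩ := hΦ.exists_dovetail (g := fun k n => 2 ^ k * (2 * n + 1))
    (Primrec.nat_mul.comp (primrec₂_pow.comp (.const 2) .fst)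
      (Primrec.succ.comp (Primrec.nat_mul.comp (.const 2) .snd))).to_comp
  have hcharFun : ∀ k, charFun A k ∈ F k := fun k => by
    obtain ⟨y, hy⟩ := Part.dom_iff_mem.1 ((hsearch k).1 (hdense.exists_two_pow_mul_odd_mem k))
    obtain ⟨n, hn⟩ := (hsearch k).2 y hy
    rwa [hcorrect _ _ hn, charFun_eq_of_iff two_pow_mul_odd_mem_RofSet_iff] at hy
  exact computableSet_of_computable_charFun (hF.of_eq_tot hcharFun)

/-- every nonzero Turing degree contains a set which is not
generically computable. -/
theorem stmt8 (A : Set ℕ) (hA : ¬ComputableSet A) :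
    ∃ B : Set ℕ, SetTuringEquivalent B A ∧ ¬GenericallyComputable B :=
  ⟨RofSet A, setTuringEquivalent_RofSet A,
    fun h => hA (computableSet_of_genericallyComputable_RofSet h)⟩
end

section
/- Every nonzero Turing degree contains a set which is not coarsely computable: for every noncomputable set A ⊆ ℕ there is a set B ⊆ ℕ with B ≡_T A such that B is not coarsely computable. -/
open Filter

/-- Partial functions `ℕ →. ℕ` computable relative to a (total) oracle `O : ℕ → ℕ`. -/
inductive RecursiveIn' (O : ℕ → ℕ) : (ℕ →. ℕ) → Prop
  | zero : RecursiveIn' O (pure 0)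
  | succ : RecursiveIn' O fun n => Part.some (n + 1)
  | left : RecursiveIn' O fun n => Part.some (Nat.unpair n).1
  | right : RecursiveIn' O fun n => Part.some (Nat.unpair n).2
  | oracle : RecursiveIn' O fun n => Part.some (O n)
  | pair {f g : ℕ →. ℕ} : RecursiveIn' O f → RecursiveIn' O g →
      RecursiveIn' O fun n => Nat.pair <$> f n <*> g n
  | comp {f g : ℕ →. ℕ} : RecursiveIn' O f → RecursiveIn' O g →
      RecursiveIn' O fun n => g n >>= f
  | prec {f g : ℕ →. ℕ} : RecursiveIn' O f → RecursiveIn' O g →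
      RecursiveIn' O (Nat.unpaired fun a n =>
        n.rec (f a) fun y IH => do let i ← IH; g (Nat.pair a (Nat.pair y i)))
  | rfind {f : ℕ →. ℕ} : RecursiveIn' O f →
      RecursiveIn' O fun a => Nat.rfind fun n => (fun m => m = 0) <$> f (Nat.pair a n)

/-- `A ≤_T B`: the characteristic function of `A` is computable relative to `B`. -/
def TuringReducible' (A B : Set ℕ) : Prop :=
  RecursiveIn' (charFun B) fun n => Part.some (charFun A n)

/-- `A ≡_T B`. -/
def TuringEquivalent' (A B : Set ℕ) : Prop :=
  TuringReducible' A B ∧ TuringReducible' B A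

/-! Take `B = log₂⁻¹(A)`: it is constant on each dyadic block `[2ⁿ, 2ⁿ⁺¹)`, with value `n ∈ A`,
and `m ↦ log₂ m`, `n ↦ 2ⁿ` are many-one reductions between `B` and `A`. Each block fills half of
`[0, 2ⁿ⁺¹)`, so if `B △ C` has density `0`, then for all large `n` the set `C` agrees with `B` on
a strict majority of the `n`-th block. For computable `C` this majority vote decides `n ∈ A` for
almost all `n`, and a finite modification of a computable set is computable. -/

open Nat

theorem Nat.count_congr_of_lt {p q : ℕ → Prop} [DecidablePred p] [DecidablePred q] {n : ℕ}
    (h : ∀ k < n, p k ↔ q k) : count p n = count q n :=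
  le_antisymm (count_mono_left fun k hk => (h k hk).1) (count_mono_left fun k hk => (h k hk).2)

theorem Nat.count_add_count_not (p : ℕ → Prop) [DecidablePred p] (n : ℕ) :
    count p n + count (fun k => ¬p k) n = n := by
  simp only [count_eq_card_filter_range]
  rw [Finset.card_filter_add_card_filter_not, Finset.card_range]

theorem Primrec.nat_pow : Primrec₂ ((· ^ ·) : ℕ → ℕ → ℕ) :=
  Primrec₂.unpaired'.1 Nat.Primrec.pow

theorem Nat.log_eq_findGreatest {b : ℕ} (hb : 1 < b) (m : ℕ) :
    log b m = Nat.findGreatest (b ^ · ≤ m) m := by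
  refine (Nat.findGreatest_eq_iff.2 ⟨log_le_self b m, fun h => ?_, fun k hk _ => ?_⟩).symm
  · exact pow_log_le_self b (fun hm => h (by simp [hm]))
  · exact fun hpow => hk.not_ge (le_log_of_pow_le hb hpow)

theorem Primrec.nat_log {b : ℕ} (hb : 1 < b) : Primrec (log b) :=
  (Primrec.nat_findGreatest .id
    (Primrec.nat_le.comp₂ (Primrec.nat_pow.comp₂ (Primrec₂.const b) Primrec₂.right)
      Primrec₂.left)).of_eq fun m => (log_eq_findGreatest hb m).symm

theorem ComputablePred.computable_count {p : ℕ → Prop} [DecidablePred p]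
    (hp : ComputablePred p) : Computable (count p) := by
  have hstep : Computable₂ fun (_ : ℕ) (kc : ℕ × ℕ) => kc.2 + if p kc.1 then 1 else 0 :=
    (Primrec.nat_add.to_comp.comp (Computable.snd.comp .snd)
      ((ComputablePred.ite (.const 1) (.const 0) hp).comp (Computable.fst.comp .snd))).to₂
  refine (Computable.nat_rec .id (Computable.const 0) hstep).of_eq fun n => ?_
  induction n with
  | zero => rfl
  | succ n ih => rw [count_succ, ← ih]; rfl

theorem ComputablePred.of_eventually_iff {p q : ℕ → Prop} (hp : ComputablePred p)
    (h : ∀ᶠ n in atTop, p n ↔ q n) : ComputablePred q := by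
  classical
  obtain ⟨N, hN⟩ := eventually_atTop.1 h
  let s := (List.range N).filter (q ·)
  have hs : ComputablePred fun n => ∃ m ∈ s, m = n :=
    (PrimrecRel.exists_mem_list Primrec.eq).comp (Primrec.const s) Primrec.id |>.computablePred
  have hlt : ComputablePred (· < N) :=
    (Primrec.nat_lt.comp Primrec.id (Primrec.const N)).computablePred
  refine ComputablePred.computable_iff.2 ⟨_, hlt.decide.cond hs.decide hp.decide, ?_⟩
  ext n
  by_cases hn : n < N
  · simp [hn, s]
  · simp [hn, hN n (not_lt.1 hn)]

theorem RecursiveIn'.of_partrec {O : ℕ → ℕ} {f : ℕ →. ℕ} (hf : Nat.Partrec f) :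
    RecursiveIn' O f := by
  induction hf with
  | zero => exact .zero
  | succ => exact .succ
  | left => exact .left
  | right => exact .right
  | pair _ _ ihf ihg => exact .pair ihf ihg
  | comp _ _ ihf ihg => exact .comp ihf ihg
  | prec _ _ ihf ihg => exact .prec ihf ihg
  | rfind _ ih => exact .rfind ih

theorem TuringReducible'.of_manyOneReducible {A B : Set ℕ}
    (h : ManyOneReducible (· ∈ A) (· ∈ B)) : TuringReducible' A B := by
  obtain ⟨f, hf, hAB⟩ := h
  have hchar : (fun n => Part.some (charFun A n)) =
      fun n => Part.some (f n) >>= fun m => Part.some (charFun B m) :=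
    funext fun n => by
      by_cases hn : f n ∈ B <;> simp [charFun, hn, show n ∈ A ↔ f n ∈ B from hAB n]
  rw [TuringReducible', hchar]
  exact .comp .oracle (.of_partrec (Partrec.nat_iff.1 hf))

open scoped Classical

theorem HasDensity.eventually_mul_count_lt {S : Set ℕ} (hS : HasDensity S 0) {d : ℕ}
    (hd : 0 < d) : ∀ᶠ k in atTop, d * count (· ∈ S) k < k := by
  obtain ⟨N, hN⟩ := eventually_atTop.1
    (Filter.Tendsto.eventually_lt_const (show (0 : ℝ) < 1 / d by positivity) hS)
  refine eventually_atTop.2 ⟨N + 1, fun k hk => ?_⟩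
  obtain ⟨j, rfl⟩ : ∃ j, k = j + 1 := ⟨k - 1, by omega⟩
  have h := hN j (by omega)
  rw [partialDensity, div_lt_div_iff₀ (by positivity) (by positivity), one_mul] at h
  rw [count_eq_card_filter_range]
  exact_mod_cast (mul_comm (d : ℝ) _ ▸ h)

theorem HasDensity.eventually_two_mul_count_dyadic_lt {S : Set ℕ} (hS : HasDensity S 0) :
    ∀ᶠ n in atTop, 2 * count (fun k => 2 ^ n + k ∈ S) (2 ^ n) < 2 ^ n := by
  -- `[2 ^ n, 2 ^ (n + 1))` is half of `[0, 2 ^ (n + 1))`, so density below `1 / 4` on the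
  -- prefix leaves less than half of the block in `S`.
  have htend : Tendsto (fun n : ℕ => 2 ^ n + 2 ^ n) atTop atTop :=
    tendsto_atTop_mono (fun n => Nat.le_add_right _ _)
      (tendsto_pow_atTop_atTop_of_one_lt one_lt_two)
  filter_upwards [htend.eventually (hS.eventually_mul_count_lt (d := 4) (by norm_num))]
    with n hn
  rw [count_add] at hn
  omega

theorem iff_lt_two_mul_count_of_two_mul_count_symmDiff_lt {B C : Set ℕ} {b : Prop} {a l : ℕ}
    (hB : ∀ k < l, a + k ∈ B ↔ b) (hBC : 2 * count (fun k => a + k ∈ symmDiff B C) l < l) :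
    b ↔ l < 2 * count (fun k => a + k ∈ C) l := by
  by_cases hb : b
  · have herr : count (fun k => a + k ∈ symmDiff B C) l = count (fun k => a + k ∉ C) l :=
      count_congr_of_lt fun k hk => by simp [Set.mem_symmDiff, (hB k hk).2 hb]
    have := count_add_count_not (fun k => a + k ∈ C) l
    simp only [hb, true_iff]
    omega
  · have herr : count (fun k => a + k ∈ symmDiff B C) l = count (fun k => a + k ∈ C) l :=
      count_congr_of_lt fun k hk => by simp [Set.mem_symmDiff, hB k hk, hb]
    simp only [hb, false_iff, not_lt]
    omega

theorem ComputableSet.of_genericallySimilar_log_preimage {A C : Set ℕ} (hC : ComputableSet C)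
    (hAC : GenericallySimilar (log 2 ⁻¹' A) C) : ComputableSet A := by
  have hblock (n : ℕ) : ∀ k < 2 ^ n, 2 ^ n + k ∈ log 2 ⁻¹' A ↔ n ∈ A := fun k hk => by
    rw [Set.mem_preimage, log_eq_of_pow_le_of_lt_pow (m := n) (by omega) (by rw [pow_succ]; omega)]
  have hcount := ComputablePred.computable_count hC
  have hmajority :
      ComputablePred fun n => 2 ^ n < 2 * count (fun k => 2 ^ n + k ∈ C) (2 ^ n) := by
    refine Computable.computablePred (Primrec.nat_lt.decide.to_comp.comp
      (Primrec.nat_pow.to_comp.comp (.const 2) .id)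
      (Primrec.nat_mul.to_comp.comp (.const 2) (Primrec.nat_sub.to_comp.comp
        (hcount.comp (Primrec.nat_pow.to_comp.comp (.const 2) .succ))
        (hcount.comp (Primrec.nat_pow.to_comp.comp (.const 2) .id))))) |>.of_eq fun n => ?_
    rw [id, Nat.succ_eq_add_one, pow_succ, mul_two, count_add, Nat.add_sub_cancel_left]
  refine hmajority.of_eventually_iff ?_
  filter_upwards [hAC.eventually_two_mul_count_dyadic_lt] with n hn
  exact (iff_lt_two_mul_count_of_two_mul_count_symmDiff_lt (hblock n) hn).symm

/-- every nonzero Turing degree contains a set which is not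
coarsely computable. -/
theorem stmt12 (A : Set ℕ) (hA : ¬ComputableSet A) :
    ∃ B : Set ℕ, TuringEquivalent' B A ∧ ¬CoarselyComputable B := by
  have hBA : ManyOneReducible (· ∈ log 2 ⁻¹' A) (· ∈ A) :=
    ⟨_, (Primrec.nat_log one_lt_two).to_comp, fun _ => Iff.rfl⟩
  have hAB : ManyOneReducible (· ∈ A) (· ∈ log 2 ⁻¹' A) :=
    ⟨(2 ^ ·), Primrec.nat_pow.to_comp.comp (.const 2) .id, fun n => by simp [log_pow]⟩
  refine ⟨log 2 ⁻¹' A, ⟨.of_manyOneReducible hBA, .of_manyOneReducible hAB⟩, ?_⟩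
  rintro ⟨C, hC, hAC⟩
  exact hA (hC.of_genericallySimilar_log_preimage hAC)
end

section
/- For all sets A, B ⊆ ℕ: A ≤_T B if and only if every set that is generically A-computable is generically B-computable (i.e. Ĝ(A) ⊆ Ĝ(B)). -/
open Filter

/-- `B` is generically `O`-computable: some partial function computable relative to
an oracle for `O` is a generic description of `B`. -/
def GenericallyComputableIn (O B : Set ℕ) : Prop :=
  ∃ Φ : ℕ →. ℕ, RecursiveInOracle (charFun O) Φ ∧ IsGenericDescription Φ B

/-!
The forward direction is relativization: answering each oracle query of an `A`-computation by
the reduction `A ≤_T B` turns it into a `B`-computation.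

For the converse, code `A` into `R(A) = ⋃_{n ∈ A} R_n`, where `R_n` is the set of numbers of
2-adic valuation `n`. `R(A)` is generically `A`-computable (compute the valuation, then ask `A`),
so by hypothesis it has a generic description `Φ` computable in `B`. Each `R_n` contains the
residue class of `2^n` modulo `2^(n+1)`, so the density-one domain of `Φ` meets it; to decide
`n ∈ A`, search with oracle `B` for some `m ∈ R_n` on which `Φ` converges and output `Φ(m)`.
By the use principle a convergent oracle computation consults only a finite prefix of the
oracle, so the search can dovetail over prefix lengths, step counts and arguments.
-/

def oraclePrefix (O : ℕ → ℕ) (k : ℕ) : List ℕ := (List.range k).map O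

theorem oraclePrefix_succ (O : ℕ → ℕ) (k : ℕ) :
    oraclePrefix O (k + 1) = oraclePrefix O k ++ [O k] := by
  simp [oraclePrefix, List.range_succ]

theorem getElem?_oraclePrefix (O : ℕ → ℕ) (k n : ℕ) :
    (oraclePrefix O k)[n]? = if n < k then some (O n) else none := by
  split_ifs with h <;> simp [oraclePrefix, h]

namespace RecursiveInOracle

variable {O : ℕ → ℕ}

theorem of_eq {f g : ℕ →. ℕ} (hf : RecursiveInOracle O f) (h : ∀ n, f n = g n) :
    RecursiveInOracle O g :=
  funext h ▸ hf

theorem of_partrec {f : ℕ →. ℕ} (hf : Partrec f) : RecursiveInOracle O f := by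
  replace hf := Partrec.nat_iff.1 hf
  induction hf with
  | zero => exact .zero
  | succ => exact .succ
  | left => exact .left
  | right => exact .right
  | pair _ _ ihf ihg => exact .pair ihf ihg
  | comp _ _ ihf ihg => exact .comp ihf ihg
  | prec _ _ ihf ihg => exact .prec ihf ihg
  | rfind _ ihf => exact .rfind ihf

theorem trans {O' : ℕ → ℕ} {f : ℕ →. ℕ} (hf : RecursiveInOracle O' f)
    (hO' : RecursiveInOracle O fun n => Part.some (O' n)) : RecursiveInOracle O f := by
  induction hf with
  | zero => exact .zero
  | succ => exact .succ
  | left => exact .left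
  | right => exact .right
  | oracle => exact hO'
  | pair _ _ ihf ihg => exact .pair ihf ihg
  | comp _ _ ihf ihg => exact .comp ihf ihg
  | prec _ _ ihf ihg => exact .prec ihf ihg
  | rfind _ ihf => exact .rfind ihf

theorem comp_computable {f : ℕ →. ℕ} {g : ℕ → ℕ} (hf : RecursiveInOracle O f)
    (hg : Computable g) : RecursiveInOracle O fun n => f (g n) :=
  (hf.comp (of_partrec hg.partrec)).of_eq fun _ => Part.bind_some _ _

theorem partrec₂_comp {H : ℕ → ℕ →. ℕ} {f : ℕ → ℕ} (hH : Partrec₂ H)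
    (hf : RecursiveInOracle O fun n => Part.some (f n)) :
    RecursiveInOracle O fun n => H n (f n) := by
  have hH' : Partrec fun z : ℕ => H z.unpair.1 z.unpair.2 :=
    hH.comp (Computable.fst.comp .unpair) (Computable.snd.comp .unpair)
  refine ((of_partrec hH').comp ((of_partrec Partrec.some).pair hf)).of_eq fun n => ?_
  simp [Seq.seq]

theorem oracle_comp {h : ℕ → ℕ → ℕ} {u : ℕ → ℕ} (hh : Computable₂ h)
    (hu : Computable u) :
    RecursiveInOracle O fun n => Part.some (h n (O (u n))) :=
  partrec₂_comp (H := fun n v => Part.some (h n v)) hh.partrec₂ (oracle.comp_computable hu)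

open Encodable Denumerable in
theorem encode_oraclePrefix :
    RecursiveInOracle O fun k => Part.some (encode (oraclePrefix O k)) := by
  -- step `y` of the primitive recursion, at `x = ⟪a, y, i⟫`, appends `O y` to the list coded by `i`
  have happend :
      Computable₂ fun (x v : ℕ) => encode (ofNat (List ℕ) x.unpair.2.unpair.2 ++ [v]) :=
    Computable.encode.comp₂ (Computable.list_append.comp₂
      ((Computable.ofNat _).comp (Computable.snd.comp (Computable.unpair.comp
        (Computable.snd.comp (Computable.unpair.comp .fst))))).to₂
      (Computable.list_cons.comp₂ .snd (Computable.const []).to₂))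
  have hstep := oracle_comp (O := O) happend
    (Computable.fst.comp (Computable.unpair.comp (Computable.snd.comp .unpair)))
  have hrec := (RecursiveInOracle.prec
    (of_partrec (Partrec.const' (Part.some (encode ([] : List ℕ))))) hstep).comp_computable
      (Primrec₂.natPair.to_comp.comp (Computable.const 0) Computable.id)
  refine hrec.of_eq fun k => ?_
  induction k with
  | zero => simp [Nat.unpaired, oraclePrefix]
  | succ k ih =>
    simp only [Nat.unpaired, Nat.unpair_pair, id] at ih ⊢
    rw [ih]
    simp [oraclePrefix_succ]

open Encodable Denumerable in
theorem partrec₂_comp_oraclePrefix {H : ℕ → List ℕ →. ℕ}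
    {len : ℕ → ℕ} (hH : Partrec₂ H) (hlen : Computable len) :
    RecursiveInOracle O fun n => H n (oraclePrefix O (len n)) :=
  (partrec₂_comp (H := fun n v => H n (ofNat (List ℕ) v))
    (hH.comp .fst ((Computable.ofNat _).comp .snd))
    (encode_oraclePrefix.comp_computable hlen)).of_eq fun n => by simp

theorem rfind_oraclePrefix {t : ℕ → ℕ → List ℕ → Bool} {len : ℕ → ℕ}
    (ht : Computable fun q : ℕ × ℕ × List ℕ => t q.1 q.2.1 q.2.2) (hlen : Computable len) :
    RecursiveInOracle O fun n => Nat.rfind fun s => Part.some (t n s (oraclePrefix O (len s))) := by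
  have hsplit : Computable fun p : ℕ × List ℕ => (p.1.unpair.1, p.1.unpair.2, p.2) :=
    (Computable.fst.comp (Computable.unpair.comp .fst)).pair
      ((Computable.snd.comp (Computable.unpair.comp .fst)).pair .snd)
  have ht' : Computable₂ fun (x : ℕ) (l : List ℕ) => t x.unpair.1 x.unpair.2 l :=
    (ht.comp hsplit).of_eq fun _ => rfl
  refine (rfind (partrec₂_comp_oraclePrefix
    (H := fun x l => Part.some (bif t x.unpair.1 x.unpair.2 l then 0 else 1))
    (Computable.cond ht' (.const 0) (.const 1)).partrec.to₂
    (hlen.comp (Computable.snd.comp .unpair)))).of_eq fun n => ?_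
  congr
  funext s
  cases h : t n s (oraclePrefix O (len s)) <;> simp [h]

end RecursiveInOracle

def IsPrefixApprox (O : ℕ → ℕ) (Φ : ℕ →. ℕ) (F : List ℕ → ℕ →. ℕ) : Prop :=
  (∀ k n y, y ∈ F (oraclePrefix O k) n → y ∈ Φ n) ∧
    ∀ n y, y ∈ Φ n → ∀ᶠ k in atTop, y ∈ F (oraclePrefix O k) n

namespace IsPrefixApprox

variable {O : ℕ → ℕ} {f g : ℕ →. ℕ} {Ff Fg : List ℕ → ℕ →. ℕ}

theorem const : IsPrefixApprox O f fun _ => f :=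
  ⟨fun _ _ _ h => h, fun _ _ h => .of_forall fun _ => h⟩

theorem oracle : IsPrefixApprox O (fun n => Part.some (O n)) fun l n => l[n]? := by
  refine ⟨fun k n y hy => ?_, fun n y hy => ?_⟩
  · rw [Part.mem_ofOption, getElem?_oraclePrefix] at hy
    split_ifs at hy
    · simpa [eq_comm] using hy
    · simp at hy
  · filter_upwards [eventually_gt_atTop n] with k hk
    simp_all [getElem?_oraclePrefix]

theorem pair (hf : IsPrefixApprox O f Ff) (hg : IsPrefixApprox O g Fg) :
    IsPrefixApprox O (fun n => Nat.pair <$> f n <*> g n)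
      fun l n => Nat.pair <$> Ff l n <*> Fg l n := by
  refine ⟨fun k n y hy => ?_, fun n y hy => ?_⟩
  · simp only [Seq.seq, Part.mem_bind_iff, Part.map_eq_map, Part.mem_map_iff] at hy ⊢
    obtain ⟨_, ⟨a, ha, rfl⟩, b, hb, rfl⟩ := hy
    exact ⟨_, ⟨a, hf.1 _ _ _ ha, rfl⟩, b, hg.1 _ _ _ hb, rfl⟩
  · simp only [Seq.seq, Part.mem_bind_iff, Part.map_eq_map, Part.mem_map_iff] at hy ⊢
    obtain ⟨_, ⟨a, ha, rfl⟩, b, hb, rfl⟩ := hy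
    filter_upwards [hf.2 _ _ ha, hg.2 _ _ hb] with k hak hbk
    exact ⟨_, ⟨a, hak, rfl⟩, b, hbk, rfl⟩

theorem comp (hf : IsPrefixApprox O f Ff) (hg : IsPrefixApprox O g Fg) :
    IsPrefixApprox O (fun n => g n >>= f) fun l n => Fg l n >>= Ff l := by
  refine ⟨fun k n y hy => ?_, fun n y hy => ?_⟩
  · obtain ⟨m, hm, hy⟩ := Part.mem_bind_iff.1 hy
    exact Part.mem_bind_iff.2 ⟨m, hg.1 _ _ _ hm, hf.1 _ _ _ hy⟩
  · obtain ⟨m, hm, hy⟩ := Part.mem_bind_iff.1 hy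
    filter_upwards [hg.2 _ _ hm, hf.2 _ _ hy] with k hmk hyk
    exact Part.mem_bind_iff.2 ⟨m, hmk, hyk⟩

theorem prec (hf : IsPrefixApprox O f Ff) (hg : IsPrefixApprox O g Fg) :
    IsPrefixApprox O
      (Nat.unpaired fun a n =>
        n.rec (f a) fun y IH => do let i ← IH; g (Nat.pair a (Nat.pair y i)))
      fun l => Nat.unpaired fun a n =>
        n.rec (Ff l a) fun y IH => (do let i ← IH; Fg l (Nat.pair a (Nat.pair y i))) := by
  refine ⟨fun k p => ?_, fun p => ?_⟩ <;> simp only [Nat.unpaired]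
  · induction (Nat.unpair p).2 with
    | zero => exact hf.1 k _
    | succ n ih =>
      intro y hy
      obtain ⟨i, hi, hy⟩ := Part.mem_bind_iff.1 hy
      exact Part.mem_bind_iff.2 ⟨i, ih i hi, hg.1 _ _ _ hy⟩
  · induction (Nat.unpair p).2 with
    | zero => exact hf.2 _
    | succ n ih =>
      intro y hy
      obtain ⟨i, hi, hy⟩ := Part.mem_bind_iff.1 hy
      filter_upwards [ih i hi, hg.2 _ _ hy] with k hik hyk
      exact Part.mem_bind_iff.2 ⟨i, hik, hyk⟩

theorem rfind (hf : IsPrefixApprox O f Ff) :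
    IsPrefixApprox O (fun a => Nat.rfind fun n => (fun m => m = 0) <$> f (Nat.pair a n))
      fun l a => Nat.rfind fun n => (fun m => m = 0) <$> Ff l (Nat.pair a n) := by
  refine ⟨fun k a y hy => ?_, fun a y hy => ?_⟩
  · have hmap : ∀ {x b}, b ∈ (fun m => decide (m = 0)) <$> Ff (oraclePrefix O k) x →
        b ∈ (fun m => decide (m = 0)) <$> f x := by
      intro x b hb
      obtain ⟨v, hv, rfl⟩ := (Part.mem_map_iff _).1 hb
      exact (Part.mem_map_iff _).2 ⟨v, hf.1 _ _ _ hv, rfl⟩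
    obtain ⟨htrue, hfalse⟩ := Nat.mem_rfind.1 hy
    exact Nat.mem_rfind.2 ⟨hmap htrue, fun hm => hmap (hfalse hm)⟩
  · have hmap : ∀ {x b}, b ∈ (fun m => decide (m = 0)) <$> f x →
        ∀ᶠ k in atTop, b ∈ (fun m => decide (m = 0)) <$> Ff (oraclePrefix O k) x := by
      intro x b hb
      obtain ⟨v, hv, rfl⟩ := (Part.mem_map_iff _).1 hb
      filter_upwards [hf.2 _ _ hv] with k hvk
      exact (Part.mem_map_iff _).2 ⟨v, hvk, rfl⟩
    obtain ⟨htrue, hfalse⟩ := Nat.mem_rfind.1 hy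
    -- `y ∈ rfind` depends only on the finitely many arguments `m ≤ y`
    have hev : ∀ᶠ k in atTop, ∀ m ∈ Finset.range (y + 1), decide (y ≤ m) ∈
        (fun m => decide (m = 0)) <$> Ff (oraclePrefix O k) (Nat.pair a m) := by
      refine (Finset.range (y + 1)).eventually_all.2 fun m hm => hmap ?_
      rcases (Nat.lt_succ_iff.1 (Finset.mem_range.1 hm)).eq_or_lt with rfl | hlt
      · simpa using htrue
      · simpa [not_le.2 hlt] using hfalse hlt
    filter_upwards [hev] with k hk
    refine Nat.mem_rfind.2 ⟨by simpa using hk y (by simp), fun {m} hm => ?_⟩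
    simpa [not_le.2 hm] using hk m (Finset.mem_range.2 (by omega))

end IsPrefixApprox

theorem RecursiveInOracle.exists_partrec₂_isPrefixApprox {O : ℕ → ℕ} {Φ : ℕ →. ℕ}
    (h : RecursiveInOracle O Φ) : ∃ F, Partrec₂ F ∧ IsPrefixApprox O Φ F := by
  have oracle_free :
      ∀ {Φ : ℕ →. ℕ}, Nat.Partrec Φ → ∃ F, Partrec₂ F ∧ IsPrefixApprox O Φ F :=
    fun hΦ => ⟨fun _ => _, (Partrec.nat_iff.2 hΦ).comp Computable.snd, .const⟩
  induction h with
  | zero => exact oracle_free .zero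
  | succ => exact oracle_free .succ
  | left => exact oracle_free .left
  | right => exact oracle_free .right
  | oracle =>
    exact ⟨_, (Computable.ofOption (Computable.list_getElem?.comp .fst .snd)).to₂, .oracle⟩
  | pair _ _ ihf ihg =>
    obtain ⟨Ff, hFf, hf⟩ := ihf
    obtain ⟨Fg, hFg, hg⟩ := ihg
    refine ⟨_, ?_, hf.pair hg⟩
    refine (hFf.bind (((hFg.comp (Computable.fst.comp .fst) (Computable.snd.comp .fst)).map
      (Primrec₂.natPair.to_comp.comp (Computable.snd.comp .fst) .snd).to₂).to₂)).to₂.of_eq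
        fun p => ?_
    simp [Seq.seq]
  | comp _ _ ihf ihg =>
    obtain ⟨Ff, hFf, hf⟩ := ihf
    obtain ⟨Fg, hFg, hg⟩ := ihg
    refine ⟨_, ?_, hf.comp hg⟩
    exact (hFg.bind (hFf.comp (Computable.fst.comp .fst) .snd).to₂).to₂
  | prec _ _ ihf ihg =>
    obtain ⟨Ff, hFf, hf⟩ := ihf
    obtain ⟨Fg, hFg, hg⟩ := ihg
    refine ⟨_, ?_, hf.prec hg⟩
    have hn : Computable fun p : List ℕ × ℕ => p.2.unpair.2 :=
      Computable.snd.comp (Computable.unpair.comp .snd)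
    have ha : Computable fun p : List ℕ × ℕ => p.2.unpair.1 :=
      Computable.fst.comp (Computable.unpair.comp .snd)
    exact (Partrec.nat_rec hn (hFf.comp .fst ha) (hFg.comp (Computable.fst.comp .fst)
      (Primrec₂.natPair.to_comp.comp (ha.comp .fst) (Primrec₂.natPair.to_comp.comp
        (Computable.fst.comp .snd) (Computable.snd.comp .snd)))).to₂).to₂
  | rfind _ ihf =>
    obtain ⟨Ff, hFf, hf⟩ := ihf
    refine ⟨_, ?_, hf.rfind⟩
    exact (Partrec.rfind ((hFf.comp (Computable.fst.comp .fst) (Primrec₂.natPair.to_comp.comp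
      (Computable.snd.comp .fst) .snd)).map
        ((Primrec.eq.comp Primrec.snd (Primrec.const 0)).decide.to_comp.to₂)).to₂).to₂

open Encodable Nat.Partrec.Code in
theorem Partrec.exists_primrec₂_stage {α σ : Type*} [Primcodable α] [Primcodable σ]
    {f : α →. σ} (hf : Partrec f) :
    ∃ g : ℕ → α → Option σ, Primrec₂ g ∧ ∀ a y, y ∈ f a ↔ ∃ s, g s a = some y := by
  obtain ⟨c, hc⟩ := exists_code.1 hf
  refine ⟨fun s a => (evaln s c (encode a)).bind decode,
    Primrec.option_bind (primrec_evaln.comp (Primrec.pair (Primrec.pair .fst (.const c))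
      (Primrec.encode.comp .snd))) (Primrec.decode.comp .snd).to₂, fun a y => ?_⟩
  have heval : ∀ v, v ∈ eval c (encode a) ↔ ∃ z ∈ f a, encode z = v := by
    intro v
    simp [hc]
  constructor
  · intro hy
    obtain ⟨s, hs⟩ := evaln_complete.1 ((heval _).2 ⟨y, hy, rfl⟩)
    exact ⟨s, by simp [Option.mem_def.1 hs]⟩
  · rintro ⟨s, hs⟩
    obtain ⟨v, hv, hdec⟩ := Option.bind_eq_some_iff.1 hs
    obtain ⟨z, hz, rfl⟩ := (heval v).1 (evaln_sound hv)
    rw [encodek] at hdec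
    exact Option.some_injective _ hdec ▸ hz

open Denumerable in
theorem RecursiveInOracle.exists_search {O : ℕ → ℕ} {Φ : ℕ →. ℕ}
    (hΦ : RecursiveInOracle O Φ) {p : ℕ → ℕ → Bool} (hp : Computable₂ p) :
    ∃ Ψ : ℕ →. ℕ, RecursiveInOracle O Ψ ∧
      (∀ n, (∃ m, p n m ∧ (Φ m).Dom) → (Ψ n).Dom) ∧
      ∀ n y, y ∈ Ψ n → ∃ m, p n m ∧ y ∈ Φ m := by
  obtain ⟨F, hF, hsound, hcompl⟩ := hΦ.exists_partrec₂_isPrefixApprox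
  obtain ⟨g, hg, hgF⟩ := hF.exists_primrec₂_stage
  -- a search point `s` encodes a prefix length `k`, a number of steps `d` and an argument `m`
  let stage (s : ℕ) (l : List ℕ) : Option ℕ :=
    g (ofNat (ℕ × ℕ × ℕ) s).2.1 (l, (ofNat (ℕ × ℕ × ℕ) s).2.2)
  let test (n s : ℕ) (l : List ℕ) : Bool :=
    p n (ofNat (ℕ × ℕ × ℕ) s).2.2 && (stage s l).isSome
  let len (s : ℕ) : ℕ := (ofNat (ℕ × ℕ × ℕ) s).1
  have hofNat : Computable (ofNat (ℕ × ℕ × ℕ)) := Computable.ofNat _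
  have hlen : Computable len := Computable.fst.comp hofNat
  have hstage : Computable₂ stage :=
    hg.to_comp.comp (Computable.fst.comp (Computable.snd.comp (hofNat.comp .fst)))
      (Computable.pair .snd (Computable.snd.comp (Computable.snd.comp (hofNat.comp .fst))))
  have harg : Computable fun q : ℕ × ℕ × List ℕ => (ofNat (ℕ × ℕ × ℕ) q.2.1).2.2 :=
    Computable.snd.comp (Computable.snd.comp (hofNat.comp (Computable.fst.comp .snd)))
  have hconv : Computable fun q : ℕ × ℕ × List ℕ => (stage q.2.1 q.2.2).isSome :=
    Primrec.option_isSome.to_comp.comp (hstage.comp (Computable.fst.comp .snd)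
      (Computable.snd.comp .snd))
  have htest : Computable fun q : ℕ × ℕ × List ℕ => test q.1 q.2.1 q.2.2 :=
    Primrec.and.to_comp.comp (hp.comp .fst harg) hconv
  have hsearch := RecursiveInOracle.rfind_oraclePrefix (O := O) htest hlen
  have hextract :
      RecursiveInOracle O fun s => Part.some ((stage s (oraclePrefix O (len s))).getD 0) :=
    partrec₂_comp_oraclePrefix (H := fun s l => Part.some ((stage s l).getD 0))
      (Computable.option_getD hstage (Computable.const 0)).partrec.to₂ hlen
  refine ⟨_, hextract.comp hsearch, fun n ⟨m, hpm, hdom⟩ => ?_, fun n y hy => ?_⟩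
  · obtain ⟨y, hy⟩ := Part.dom_iff_mem.1 hdom
    obtain ⟨k, hk⟩ := (hcompl m y hy).exists
    obtain ⟨d, hd⟩ := (hgF (oraclePrefix O k, m) y).1 hk
    have hfound : test n (Encodable.encode (k, d, m))
        (oraclePrefix O (len (Encodable.encode (k, d, m)))) := by
      simp [test, stage, len, hpm, hd]
    obtain ⟨s, hs, -⟩ := Nat.rfind_min' (p := fun s => test n s (oraclePrefix O (len s))) hfound
    exact Part.dom_iff_mem.2 ⟨_, Part.mem_bind_iff.2 ⟨s, hs, Part.mem_some _⟩⟩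
  · obtain ⟨s, hs, hy⟩ := Part.mem_bind_iff.1 hy
    have hpass := Nat.rfind_spec hs
    simp only [test, Part.mem_some_iff, eq_comm (a := true), Bool.and_eq_true,
      Option.isSome_iff_exists] at hpass
    obtain ⟨hpm, v, hv⟩ := hpass
    refine ⟨_, hpm, ?_⟩
    rw [Part.mem_some_iff.1 hy, hv]
    exact hsound _ _ _ ((hgF _ v).2 ⟨_, hv⟩)

theorem hasDensity_ne_zero : HasDensity {x : ℕ | x ≠ 0} 1 := by
  have h1 : Tendsto (fun n : ℕ => 1 - 1 / ((n : ℝ) + 1)) atTop (nhds 1) := by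
    simpa using tendsto_const_nhds.sub (tendsto_one_div_add_atTop_nhds_zero_nat (𝕜 := ℝ))
  refine h1.congr fun n => ?_
  have he : (Finset.range (n + 1)).filter (· ∈ {x : ℕ | x ≠ 0}) =
      (Finset.range (n + 1)).erase 0 := by
    ext x
    simp [and_comm]
  rw [partialDensity, Finset.filter_congr_decidable, he, Finset.card_erase_of_mem (by simp),
    Finset.card_range]
  field_simp
  simp

theorem HasDensity.exists_mem_mod_eq {D : Set ℕ} (hD : HasDensity D 1) {c r : ℕ} (hr : r < c) :
    ∃ m ∈ D, m % c = r := by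
  classical
  by_contra! hD_avoid
  have hc : 0 < c := by omega
  -- `D` misses the `t` residues `c * i + r`, `i < t`, below `c * t`
  have hcount : ∀ t, ((Finset.range (c * t)).filter (· ∈ D)).card ≤ c * t - t := by
    intro t
    have hinj : Set.InjOn (fun i => c * i + r) (Finset.range t) := fun i _ j _ h => by
      simpa [hc.ne'] using h
    have hsub : (Finset.range t).image (fun i => c * i + r) ⊆ Finset.range (c * t) := by
      intro m hm
      obtain ⟨i, hi, rfl⟩ := Finset.mem_image.1 hm
      simp only [Finset.mem_range] at hi ⊢
      nlinarith
    calc ((Finset.range (c * t)).filter (· ∈ D)).card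
        ≤ (Finset.range (c * t) \ (Finset.range t).image (fun i => c * i + r)).card := by
          refine Finset.card_le_card fun m hm => ?_
          obtain ⟨hm, hmD⟩ := Finset.mem_filter.1 hm
          refine Finset.mem_sdiff.2 ⟨hm, fun him => ?_⟩
          obtain ⟨i, -, rfl⟩ := Finset.mem_image.1 him
          exact hD_avoid _ hmD (by simp [Nat.add_mod, Nat.mod_eq_of_lt hr])
      _ = c * t - t := by
          rw [Finset.card_sdiff_of_subset hsub, Finset.card_image_of_injOn hinj,
            Finset.card_range, Finset.card_range]
  have hbound : ∀ t, 1 ≤ t → partialDensity D (c * t - 1) ≤ 1 - 1 / c := by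
    intro t ht
    have hct : c * t - 1 + 1 = c * t :=
      Nat.sub_add_cancel (Nat.one_le_iff_ne_zero.2 (by positivity))
    rw [partialDensity, Finset.filter_congr_decidable, hct, ← Nat.cast_add_one, hct]
    rw [div_le_iff₀ (by positivity)]
    calc (((Finset.range (c * t)).filter (· ∈ D)).card : ℝ) ≤ ((c * t - t : ℕ) : ℝ) := by
          exact_mod_cast hcount t
      _ = (1 - 1 / c) * ((c * t : ℕ) : ℝ) := by
          rw [Nat.cast_sub (Nat.le_mul_of_pos_left t hc)]
          field_simp
          push_cast
          ring
  have hsub : Tendsto (fun t => c * t - 1) atTop atTop :=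
    tendsto_atTop_atTop.2 fun b => ⟨b + 1, fun t ht => by
      have := Nat.le_mul_of_pos_left t hc
      omega⟩
  have hle := le_of_tendsto (hD.comp hsub) (eventually_atTop.2 ⟨1, hbound⟩)
  have : (0 : ℝ) < 1 / c := by positivity
  linarith

theorem primrec₂_pow_s18 : Primrec₂ (· ^ · : ℕ → ℕ → ℕ) :=
  Primrec₂.unpaired'.1 Nat.Primrec.pow

theorem mem_Rset_of_mod_eq {m n : ℕ} (h : m % 2 ^ (n + 1) = 2 ^ n) : m ∈ Rset n := by
  refine ⟨?_, fun hdvd =>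
    (pow_pos two_pos n).ne' (h ▸ Nat.mod_eq_zero_of_dvd hdvd)⟩
  rw [← Nat.mod_add_div m (2 ^ (n + 1)), h, pow_succ, mul_assoc]
  exact dvd_add dvd_rfl (dvd_mul_right _ _)

theorem exists_mem_Rset_iff {m : ℕ} : (∃ k, m ∈ Rset k) ↔ m ≠ 0 := by
  refine ⟨fun ⟨k, _, hk⟩ hm => hk (hm ▸ dvd_zero _), fun hm => ?_⟩
  obtain ⟨k, q, hq, rfl⟩ := Nat.exists_eq_two_pow_mul_odd hm
  refine ⟨k, dvd_mul_right _ _, fun hdvd => ?_⟩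
  rw [pow_succ, Nat.mul_dvd_mul_iff_left (by positivity)] at hdvd
  exact Nat.not_even_iff_odd.2 hq (even_iff_two_dvd.2 hdvd)

theorem eq_of_mem_Rset {m j k : ℕ} (hj : m ∈ Rset j) (hk : m ∈ Rset k) : j = k := by
  rcases lt_trichotomy j k with h | h | h
  · exact absurd (dvd_trans (pow_dvd_pow 2 (Nat.succ_le_of_lt h)) hk.1) hj.2
  · exact h
  · exact absurd (dvd_trans (pow_dvd_pow 2 (Nat.succ_le_of_lt h)) hj.1) hk.2

theorem charFun_RofSet_s18 {A : Set ℕ} {m k : ℕ} (hm : m ∈ Rset k) :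
    charFun (RofSet A) m = charFun A k := by
  have hmem : m ∈ RofSet A ↔ k ∈ A := by
    simp only [RofSet, Set.mem_iUnion, exists_prop]
    exact ⟨fun ⟨j, hj, hmj⟩ => eq_of_mem_Rset hmj hm ▸ hj, fun hk => ⟨k, hk, hm⟩⟩
  simp only [charFun]
  split_ifs <;> simp_all

theorem mem_rfind_iff_mem_Rset {m k : ℕ} :
    k ∈ Nat.rfind (fun j => Part.some (m % 2 ^ (j + 1) != 0)) ↔ m ∈ Rset k := by
  constructor
  · intro hk
    refine ⟨?_, by simpa [Nat.dvd_iff_mod_eq_zero] using Nat.rfind_spec hk⟩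
    cases k with
    | zero => exact one_dvd m
    | succ j => simpa [Nat.dvd_iff_mod_eq_zero] using Nat.rfind_min hk (Nat.lt_succ_self j)
  · rintro ⟨hk, hk'⟩
    refine Nat.mem_rfind.2 ⟨by simpa [Nat.dvd_iff_mod_eq_zero] using hk', fun {j} hj => ?_⟩
    simpa [Nat.dvd_iff_mod_eq_zero] using (pow_dvd_pow 2 hj).trans hk

theorem genericallyComputableIn_RofSet (A : Set ℕ) : GenericallyComputableIn A (RofSet A) := by
  have htest : Computable₂ fun m j : ℕ => m % 2 ^ (j + 1) != 0 :=
    (Primrec.not.comp (Primrec.beq.comp (Primrec.nat_mod.comp .fst (primrec₂_pow_s18.comp (.const 2)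
      (Primrec.succ.comp .snd))) (.const 0))).to_comp
  refine ⟨fun m => Nat.rfind (fun j => Part.some (m % 2 ^ (j + 1) != 0)) >>=
      fun k => Part.some (charFun A k),
    .comp .oracle (.of_partrec (Partrec.rfind htest.partrec₂)), fun m y hy => ?_, ?_⟩
  · obtain ⟨k, hk, hy⟩ := Part.mem_bind_iff.1 hy
    rw [Part.mem_some_iff.1 hy, charFun_RofSet_s18 (mem_rfind_iff_mem_Rset.1 hk)]
  · convert hasDensity_ne_zero using 1
    ext m
    refine ⟨fun h => ?_, fun hm => ?_⟩
    · obtain ⟨k, hk, -⟩ := Part.mem_bind_iff.1 (Part.get_mem h)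
      exact exists_mem_Rset_iff.1 ⟨k, mem_rfind_iff_mem_Rset.1 hk⟩
    · obtain ⟨k, hk⟩ := exists_mem_Rset_iff.2 hm
      exact Part.dom_iff_mem.2
        ⟨_, Part.mem_bind_iff.2 ⟨k, mem_rfind_iff_mem_Rset.2 hk, Part.mem_some _⟩⟩

theorem turingReducibleSet_of_genericallyComputableIn_RofSet {A B : Set ℕ}
    (h : GenericallyComputableIn B (RofSet A)) : TuringReducibleSet A B := by
  obtain ⟨Φ, hΦ, hcorrect, hdense⟩ := h
  have hp : Computable₂ fun n m : ℕ => m % 2 ^ (n + 1) == 2 ^ n :=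
    (Primrec.beq.comp (Primrec.nat_mod.comp .snd (primrec₂_pow_s18.comp (.const 2)
      (Primrec.succ.comp .fst))) (primrec₂_pow_s18.comp (.const 2) .fst)).to_comp
  obtain ⟨Ψ, hΨ, hΨdom, hΨval⟩ := hΦ.exists_search hp
  refine hΨ.of_eq fun n => Part.eq_some_iff.2 ?_
  obtain ⟨m, hmΦ, hm⟩ :=
    hdense.exists_mem_mod_eq (Nat.pow_lt_pow_succ one_lt_two : 2 ^ n < 2 ^ (n + 1))
  obtain ⟨y, hy⟩ := Part.dom_iff_mem.1 (hΨdom n ⟨m, by simpa using hm, hmΦ⟩)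
  obtain ⟨m', hm', hym'⟩ := hΨval n y hy
  rwa [hcorrect m' y hym', charFun_RofSet_s18 (mem_Rset_of_mod_eq (by simpa using hm'))] at hy

/-- `A ≤_T B` iff `Ĝ(A) ⊆ Ĝ(B)`. -/
theorem stmt18 (A B : Set ℕ) :
    TuringReducibleSet A B ↔
      ∀ C : Set ℕ, GenericallyComputableIn A C → GenericallyComputableIn B C := by
  refine ⟨fun hAB C ⟨Φ, hΦ, hdesc⟩ => ⟨Φ, hΦ.trans hAB, hdesc⟩, fun h => ?_⟩
  exact turingReducibleSet_of_genericallyComputableIn_RofSet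
    (h _ (genericallyComputableIn_RofSet A))
end
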